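/- Let l be a list of length n over a linear order with no duplicate entries. Then for every k : ℕ, the k-fold iterate L^k(l) of the local-minima operation has length at most ⌈n / 2^k⌉; in particular, for every k with 2^k ≥ n, the list L^k(l) has length at most 1 (so at most ⌈log₂ n⌉ of the iterates have more than one entry). -/

import Mathlib

open scoped Classical

/-- An index `i` of the list `l` is a local-minimum index if `l[i] < l[i-1]` whenever
`i > 0` and `l[i] < l[i+1]` whenever `i + 1 < l.length`. -/
def IsLocalMinIdx {α : Type*} [LinearOrder α] (l : List α) (i : ℕ) : Prop :=
  ∃ h : i < l.length,
    (∀ _hi : 0 < i, l[i] < l[i - 1]) ∧ (∀ _hj : i + 1 < l.length, l[i] < l[i + 1])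

/-- The local-minima operation: the sublist of entries of `l` at local-minimum
indices, in order. -/
noncomputable def localMinima {α : Type*} [LinearOrder α] (l : List α) : List α :=
  ((List.finRange l.length).filter fun i => decide (IsLocalMinIdx l i.val)).map l.get

/-! Two neighbouring entries cannot both be smaller than each other, so no two consecutive indices
are local-minimum indices and `L` at least halves the length, rounding up: `|L l| ≤ ⌈|l| / 2⌉`.
Since `⌈⌈n / a⌉ / 2⌉ = ⌈n / 2a⌉`, iterating gives `|L^k l| ≤ ⌈|l| / 2^k⌉`, which is at most `1`
once `2^k ≥ |l|`, i.e. for every `k ≥ clog₂ |l|`. -/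

theorem Nat.ceilDiv_ceilDiv {a b : ℕ} (ha : 0 < a) (hb : 0 < b) (n : ℕ) :
    n ⌈/⌉ a ⌈/⌉ b = n ⌈/⌉ (a * b) :=
  eq_of_forall_ge_iff fun c => by
    rw [ceilDiv_le_iff_le_mul hb, ceilDiv_le_iff_le_mul ha,
      ceilDiv_le_iff_le_mul (Nat.mul_pos ha hb), Nat.mul_assoc]

theorem Nat.count_le_half_of_not_consecutive {p : ℕ → Prop} [DecidablePred p]
    (hp : ∀ i, p i → ¬p (i + 1)) (n : ℕ) : Nat.count p n ≤ n ⌈/⌉ 2 := by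
  rw [Nat.ceilDiv_eq_add_pred_div]
  induction n using Nat.twoStepInduction with
  | zero => simp
  | one => exact Nat.count_le p
  | more n ih _ =>
    have : Nat.count p (n + 2) ≤ Nat.count p n + 1 := by
      by_cases h : p n <;> simp [Nat.count_succ, h, hp n, ite_le_one]
    omega

theorem IsLocalMinIdx.not_succ {α : Type*} [LinearOrder α] {l : List α} {i : ℕ}
    (hi : IsLocalMinIdx l i) : ¬IsLocalMinIdx l (i + 1) := by
  rintro ⟨hlt, hleft, -⟩
  obtain ⟨_, -, hright⟩ := hi
  exact (hright hlt).asymm (hleft i.succ_pos)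

theorem length_localMinima {α : Type*} [LinearOrder α] (l : List α) :
    (localMinima l).length = Nat.count (IsLocalMinIdx l) l.length := by
  rw [localMinima, List.length_map, ← List.countP_eq_length_filter, Nat.count,
    ← List.map_coe_finRange_eq_range, List.countP_map]
  rfl

theorem length_localMinima_le {α : Type*} [LinearOrder α] (l : List α) :
    (localMinima l).length ≤ l.length ⌈/⌉ 2 := by
  rw [length_localMinima]
  exact Nat.count_le_half_of_not_consecutive (fun _ hi => hi.not_succ) _

theorem length_localMinima_iterate_le {α : Type*} [LinearOrder α] (l : List α) (k : ℕ) :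
    (localMinima^[k] l).length ≤ l.length ⌈/⌉ 2 ^ k := by
  induction k with
  | zero => simp
  | succ k ih =>
    rw [Function.iterate_succ_apply', pow_succ, ← Nat.ceilDiv_ceilDiv (by positivity) two_pos]
    exact (length_localMinima_le _).trans ((gc_mul_ceilDiv two_pos).monotone_l ih)

theorem length_localMinima_iterate_le_one {α : Type*} [LinearOrder α] {l : List α} {k : ℕ}
    (hk : l.length ≤ 2 ^ k) : (localMinima^[k] l).length ≤ 1 :=
  (length_localMinima_iterate_le l k).trans <|
    (ceilDiv_le_iff_le_mul (by positivity)).2 (by simpa using hk)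

theorem localMinima_iterate_length_general {α : Type*} [LinearOrder α]
    (l : List α) :
    (∀ k : ℕ, (localMinima^[k] l).length ≤ (l.length + 2 ^ k - 1) / 2 ^ k) ∧
    (∀ k : ℕ, l.length ≤ 2 ^ k → (localMinima^[k] l).length ≤ 1) ∧
    {k : ℕ | 1 < (localMinima^[k] l).length}.ncard ≤ Nat.clog 2 l.length := by
  refine ⟨length_localMinima_iterate_le l, fun _ => length_localMinima_iterate_le_one, ?_⟩
  have hsub : {k : ℕ | 1 < (localMinima^[k] l).length} ⊆ Set.Iio (Nat.clog 2 l.length) :=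
    fun _ hk => lt_of_not_ge fun h =>
      (length_localMinima_iterate_le_one ((Nat.clog_le_iff_le_pow one_lt_two).1 h)).not_gt hk
  simpa using Set.ncard_le_ncard hsub (Set.finite_Iio _)

/-- For a duplicate-free list `l` of length `n`, the `k`-fold iterate of
the local-minima operation has length at most `⌈n / 2^k⌉`; in particular for
`2^k ≥ n` it has length at most `1`, so at most `⌈log₂ n⌉` of the iterates have more
than one entry. -/
theorem localMinima_iterate_length {α : Type*} [LinearOrder α]
    (l : List α) (hl : l.Nodup) :
    (∀ k : ℕ, (localMinima^[k] l).length ≤ (l.length + 2 ^ k - 1) / 2 ^ k) ∧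
    (∀ k : ℕ, l.length ≤ 2 ^ k → (localMinima^[k] l).length ≤ 1) ∧
    {k : ℕ | 1 < (localMinima^[k] l).length}.ncard ≤ Nat.clog 2 l.length :=
  localMinima_iterate_length_general l
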